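/- arXiv:2207.12529 — 5 statements merged into one kernel-verified Lean document; each statement's English description precedes it below -/
import Mathlib

section
/- Let H be a real inner product space, τ: H → [0,∞) a cost function, and S a subset of the unit sphere of H such that τ(f) ≤ sup_{w∈S} |⟨f,w⟩| for all f ∈ H. Then for any f ∈ H and ε > 0, there exist m ≤ ⌊‖f‖²/ε²⌋ points w₁,…,w_m ∈ S and scalars λ₁,…,λ_m ∈ ℝ such that τ(f − Σᵢ λᵢ wᵢ) ≤ ε. -/
/-!
Greedy approximation. As long as `τ g > ε`, the separation property yields `w ∈ S` with
`|⟪g, w⟫| > ε`; subtracting the projection `⟪g, w⟫ • w` lowers `‖g‖²` by more than `ε²`.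
Starting from `f`, this can happen at most `⌊‖f‖² / ε²⌋` times.
-/

open scoped RealInnerProductSpace

section

variable {H : Type*} [NormedAddCommGroup H] [InnerProductSpace ℝ H]

lemma norm_sub_inner_smul_sq {w : H} (hw : ‖w‖ = 1) (g : H) :
    ‖g - ⟪g, w⟫ • w‖ ^ 2 = ‖g‖ ^ 2 - ⟪g, w⟫ ^ 2 := by
  rw [norm_sub_sq_real, real_inner_smul_right, norm_smul, hw, mul_one, Real.norm_eq_abs, sq_abs]
  ring

lemma biSup_abs_inner_le_norm {S : Set H} (hS : ∀ z ∈ S, ‖z‖ = 1) (g : H) :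
    ⨆ w ∈ S, |⟪g, w⟫| ≤ ‖g‖ :=
  Real.iSup_le (fun w => Real.iSup_le (fun hw => by
    simpa [hS w hw] using abs_real_inner_le_norm g w) (norm_nonneg g)) (norm_nonneg g)

lemma exists_mem_lt_abs_inner_of_lt_biSup {S : Set H} {g : H} {ε : ℝ} (hε : 0 ≤ ε)
    (h : ε < ⨆ w ∈ S, |⟪g, w⟫|) : ∃ w ∈ S, ε < |⟪g, w⟫| := by
  obtain ⟨w, hw⟩ := exists_lt_of_lt_ciSup h
  by_cases hwS : w ∈ S
  · exact ⟨w, hwS, by rwa [ciSup_pos hwS] at hw⟩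
  · rw [ciSup_neg hwS, Real.sSup_empty] at hw
    exact absurd hw (not_lt.2 hε)

lemma exists_mem_norm_sub_inner_smul_sq_lt {S : Set H} (hS : ∀ z ∈ S, ‖z‖ = 1) {g : H}
    {ε : ℝ} (hε : 0 ≤ ε) (h : ε < ⨆ w ∈ S, |⟪g, w⟫|) :
    ∃ w ∈ S, ‖g - ⟪g, w⟫ • w‖ ^ 2 < ‖g‖ ^ 2 - ε ^ 2 := by
  obtain ⟨w, hwS, hw⟩ := exists_mem_lt_abs_inner_of_lt_biSup hε h
  refine ⟨w, hwS, ?_⟩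
  rw [norm_sub_inner_smul_sq (hS w hwS), ← sq_abs ⟪g, w⟫]
  nlinarith

theorem exists_sum_smul_approx_of_norm_sq_lt {τ : H → ℝ} {S : Set H}
    (hS : ∀ z ∈ S, ‖z‖ = 1) (hsep : ∀ f : H, τ f ≤ ⨆ w ∈ S, |⟪f, w⟫|) {ε : ℝ} (hε : 0 < ε) :
    ∀ (n : ℕ) (g : H), ‖g‖ ^ 2 < (n + 1) * ε ^ 2 →
      ∃ (m : ℕ) (w : Fin m → H) (lam : Fin m → ℝ),
        m ≤ n ∧ (∀ i, w i ∈ S) ∧ τ (g - ∑ i, lam i • w i) ≤ ε := by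
  intro n
  induction n with
  | zero =>
    intro g hg
    have hgε : ‖g‖ < ε := by
      refine lt_of_pow_lt_pow_left₀ 2 hε.le ?_
      simpa using hg
    refine ⟨0, Fin.elim0, Fin.elim0, le_rfl, finZeroElim, ?_⟩
    simpa using ((hsep g).trans (biSup_abs_inner_le_norm hS g)).trans hgε.le
  | succ n ih =>
    intro g hg
    by_cases hτg : τ g ≤ ε
    · exact ⟨0, Fin.elim0, Fin.elim0, Nat.zero_le _, finZeroElim, by simpa using hτg⟩
    obtain ⟨w, hwS, hw⟩ :=
      exists_mem_norm_sub_inner_smul_sq_lt hS hε.le ((not_le.1 hτg).trans_le (hsep g))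
    obtain ⟨m, v, lam, hm, hvS, hτ⟩ := ih (g - ⟪g, w⟫ • w) (by push_cast at hg; linarith)
    refine ⟨m + 1, Fin.cons w v, Fin.cons ⟪g, w⟫ lam, by omega,
      Fin.forall_fin_succ.2 ⟨hwS, hvS⟩, ?_⟩
    rwa [Fin.sum_univ_succ, Fin.cons_zero, Fin.cons_zero, sub_add_eq_sub_sub]

end

theorem stmt0_general {H : Type*} [NormedAddCommGroup H] [InnerProductSpace ℝ H]
    (τ : H → ℝ)
    (S : Set H) (hS : ∀ z ∈ S, ‖z‖ = 1)
    (hsep : ∀ f : H, τ f ≤ ⨆ w ∈ S, |⟪f, w⟫|)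
    (f : H) (ε : ℝ) (hε : 0 < ε) :
    ∃ (m : ℕ) (w : Fin m → H) (lam : Fin m → ℝ),
      m ≤ ⌊‖f‖ ^ 2 / ε ^ 2⌋₊ ∧ (∀ i, w i ∈ S) ∧
      τ (f - ∑ i, lam i • w i) ≤ ε := by
  refine exists_sum_smul_approx_of_norm_sq_lt hS hsep hε _ f ?_
  rw [← div_lt_iff₀ (by positivity)]
  exact Nat.lt_floor_add_one _

/-- **Greedy approximation (energy increment) lemma.**
If `τ : H → [0,∞)` is separated by `S ⊆ {‖z‖ = 1}`, i.e.
`τ f ≤ sup_{w ∈ S} |⟪f, w⟫|`, then every `f` admits an `ε`-approximation (in the cost `τ`)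
by a linear combination of at most `⌊‖f‖² / ε²⌋` elements of `S`. -/
theorem stmt0 {H : Type*} [NormedAddCommGroup H] [InnerProductSpace ℝ H]
    (τ : H → ℝ) (hτ : ∀ f : H, 0 ≤ τ f)
    (S : Set H) (hS : ∀ z ∈ S, ‖z‖ = 1)
    (hsep : ∀ f : H, τ f ≤ ⨆ w ∈ S, |⟪f, w⟫|)
    (f : H) (ε : ℝ) (hε : 0 < ε) :
    ∃ (m : ℕ) (w : Fin m → H) (lam : Fin m → ℝ),
      m ≤ ⌊‖f‖ ^ 2 / ε ^ 2⌋₊ ∧ (∀ i, w i ∈ S) ∧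
      τ (f - ∑ i, lam i • w i) ≤ ε :=
  stmt0_general τ S hS hsep f ε hε
end

section
/- Let x₁,…,x_m ∈ ℝⁿ, let d ≥ 2 be an integer, and let S ⊆ Sⁿ⁻¹ be any subset of the unit sphere. If ε₁,…,ε_m are independent Rademacher random variables, then E_ε sup_{z∈S} |Σ_{i=1}^m εᵢ ⟨xᵢ,z⟩^d| ≤ 2d (Σ_{i=1}^m ‖xᵢ‖₂^{2d})^{1/2}. -/
/-!
Send `z` to its `d`-th tensor power `z^{⊗d}`, so that `⟨x, z⟩^d = ⟨x^{⊗d}, z^{⊗d}⟩` and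
`‖z^{⊗d}‖ = 1` on the sphere. The supremum is then at most `‖∑ εᵢ xᵢ^{⊗d}‖`, whose mean is at
most the root mean square `(∑ ‖xᵢ‖^{2d})^{1/2}` by orthogonality of the Rademacher signs.
-/

open scoped RealInnerProductSpace
open Finset

noncomputable section

def tensorPower {ι : Type*} (d : ℕ) (z : EuclideanSpace ℝ ι) : EuclideanSpace ℝ (Fin d → ι) :=
  WithLp.toLp 2 fun j => ∏ k, z (j k)

theorem inner_tensorPower {ι : Type*} [Fintype ι] (d : ℕ)
    (x z : EuclideanSpace ℝ ι) : ⟪tensorPower d x, tensorPower d z⟫ = ⟪x, z⟫ ^ d := by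
  simp only [tensorPower, PiLp.inner_apply, RCLike.inner_apply, conj_trivial]
  rw [sum_pow', Fintype.piFinset_univ]
  simp [prod_mul_distrib]

theorem norm_tensorPower {ι : Type*} [Fintype ι] (d : ℕ)
    (z : EuclideanSpace ℝ ι) : ‖tensorPower d z‖ = ‖z‖ ^ d := by
  rw [← sq_eq_sq₀ (norm_nonneg _) (by positivity), ← real_inner_self_eq_norm_sq,
    inner_tensorPower, real_inner_self_eq_norm_sq, ← pow_mul, ← pow_mul, mul_comm]

def rademacher {κ : Type*} (ε : κ → Bool) (i : κ) : ℝ :=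
  if ε i then 1 else -1

theorem sum_rademacher_mul_rademacher {κ : Type*} [Fintype κ] [DecidableEq κ] (i j : κ) :
    ∑ ε : κ → Bool, rademacher ε i * rademacher ε j =
      if i = j then 2 ^ Fintype.card κ else 0 := by
  split_ifs with hij
  · subst hij
    have hsq (ε : κ → Bool) : rademacher ε i * rademacher ε i = 1 := by
      unfold rademacher; split_ifs <;> norm_num
    simp [hsq]
  · -- flipping the `i`-th sign is an involution that negates every summand
    set flip : (κ → Bool) → κ → Bool := fun ε => Function.update ε i (!ε i)
    have hflip : Function.Involutive flip := fun ε => by simp [flip]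
    have hneg (ε : κ → Bool) :
        rademacher (flip ε) i * rademacher (flip ε) j = -(rademacher ε i * rademacher ε j) := by
      simp only [flip, rademacher, Function.update_self, Function.update_of_ne (Ne.symm hij)]
      cases ε i <;> cases ε j <;> simp
    have h := Equiv.sum_comp hflip.toPerm fun ε => rademacher ε i * rademacher ε j
    simp only [Function.Involutive.coe_toPerm, hneg, sum_neg_distrib] at h
    linarith

theorem sum_norm_sq_rademacher_sum {κ E : Type*} [Fintype κ] [DecidableEq κ]
    [NormedAddCommGroup E] [InnerProductSpace ℝ E] (v : κ → E) :
    ∑ ε : κ → Bool, ‖∑ i, rademacher ε i • v i‖ ^ 2 = 2 ^ Fintype.card κ * ∑ i, ‖v i‖ ^ 2 := by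
  have expand (ε : κ → Bool) : ‖∑ i, rademacher ε i • v i‖ ^ 2 =
      ∑ i, ∑ j, rademacher ε i * rademacher ε j * ⟪v i, v j⟫ := by
    simp only [← real_inner_self_eq_norm_sq, sum_inner, inner_sum, real_inner_smul_left,
      real_inner_smul_right]
    exact sum_congr rfl fun i _ => sum_congr rfl fun j _ => by rw [real_inner_comm]; ring
  calc _ = ∑ i, ∑ j, (∑ ε : κ → Bool, rademacher ε i * rademacher ε j) * ⟪v i, v j⟫ := by
        simp only [expand, sum_mul]
        rw [sum_comm]
        exact sum_congr rfl fun i _ => sum_comm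
    _ = 2 ^ Fintype.card κ * ∑ i, ‖v i‖ ^ 2 := by
        simp [sum_rademacher_mul_rademacher, mul_sum]

theorem sum_norm_rademacher_sum_le {κ E : Type*} [Fintype κ] [DecidableEq κ]
    [NormedAddCommGroup E] [InnerProductSpace ℝ E] (v : κ → E) :
    ∑ ε : κ → Bool, ‖∑ i, rademacher ε i • v i‖ ≤
      2 ^ Fintype.card κ * √(∑ i, ‖v i‖ ^ 2) := by
  have hsq := sq_sum_le_card_mul_sum_sq (s := univ)
    (f := fun ε : κ → Bool => ‖∑ i, rademacher ε i • v i‖)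
  simp only [sum_norm_sq_rademacher_sum, card_univ, Fintype.card_fun, Fintype.card_bool,
    Nat.cast_pow, Nat.cast_ofNat] at hsq
  rw [← Real.sqrt_sq (by positivity : (0 : ℝ) ≤ 2 ^ Fintype.card κ),
    ← Real.sqrt_mul (by positivity)]
  exact (Real.le_sqrt (by positivity) (by positivity)).2 (by linarith)

theorem iSup_abs_sum_rademacher_mul_inner_pow_le {ι κ : Type*} [Fintype ι]
    [Fintype κ] (d : ℕ) (x : κ → EuclideanSpace ℝ ι) (S : Set (EuclideanSpace ℝ ι))
    (hS : S ⊆ Metric.closedBall 0 1) (ε : κ → Bool) :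
    ⨆ z ∈ S, |∑ i, rademacher ε i * ⟪x i, z⟫ ^ d| ≤
      ‖∑ i, rademacher ε i • tensorPower d (x i)‖ := by
  refine Real.iSup_le (fun z => Real.iSup_le (fun hz => ?_) (norm_nonneg _)) (norm_nonneg _)
  have hz : ‖tensorPower d z‖ ≤ 1 := by
    rw [norm_tensorPower]
    exact pow_le_one₀ (norm_nonneg z) (mem_closedBall_zero_iff.1 (hS hz))
  calc |∑ i, rademacher ε i * ⟪x i, z⟫ ^ d|
      = |⟪∑ i, rademacher ε i • tensorPower d (x i), tensorPower d z⟫| := by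
        simp only [sum_inner, real_inner_smul_left, inner_tensorPower]
    _ ≤ ‖∑ i, rademacher ε i • tensorPower d (x i)‖ * ‖tensorPower d z‖ :=
        abs_real_inner_le_norm _ _
    _ ≤ ‖∑ i, rademacher ε i • tensorPower d (x i)‖ :=
        mul_le_of_le_one_right (norm_nonneg _) hz

end

/-- **Khintchine inequality for symmetric tensors.**
For vectors `x₁, …, x_m ∈ ℝⁿ`, an integer `d ≥ 2`, and any subset `S` of the unit sphere,
`𝔼_ε sup_{z ∈ S} |∑ i ε i ⟨x i, z⟩^d| ≤ 2 d (∑ i ‖x i‖^{2d})^{1/2}`,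
where the `ε i` are independent Rademacher signs. -/
theorem stmt3 (n m d : ℕ) (hd : 2 ≤ d)
    (x : Fin m → EuclideanSpace ℝ (Fin n))
    (S : Set (EuclideanSpace ℝ (Fin n)))
    (hS : S ⊆ Metric.sphere (0 : EuclideanSpace ℝ (Fin n)) 1) :
    (∑ ε : Fin m → Bool,
        ⨆ z ∈ S, |∑ i, (if ε i then (1 : ℝ) else -1) * ⟪x i, z⟫ ^ d|) / 2 ^ m
      ≤ 2 * d * Real.sqrt (∑ i, ‖x i‖ ^ (2 * d)) := by
  have hball : S ⊆ Metric.closedBall 0 1 := hS.trans Metric.sphere_subset_closedBall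
  have hmean : (∑ ε : Fin m → Bool,
      ⨆ z ∈ S, |∑ i, rademacher ε i * ⟪x i, z⟫ ^ d|) / 2 ^ m ≤ √(∑ i, ‖x i‖ ^ (2 * d)) := by
    rw [div_le_iff₀ (by positivity), mul_comm]
    calc _ ≤ ∑ ε : Fin m → Bool, ‖∑ i, rademacher ε i • tensorPower d (x i)‖ :=
          sum_le_sum fun ε _ => iSup_abs_sum_rademacher_mul_inner_pow_le d x S hball ε
      _ ≤ 2 ^ m * √(∑ i, ‖tensorPower d (x i)‖ ^ 2) := by
          simpa using sum_norm_rademacher_sum_le fun i => tensorPower d (x i)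
      _ = 2 ^ m * √(∑ i, ‖x i‖ ^ (2 * d)) := by simp_rw [norm_tensorPower, ← pow_mul, mul_comm]
  have hd' : (1 : ℝ) ≤ 2 * d := by
    have : (2 : ℝ) ≤ d := by exact_mod_cast hd
    linarith
  exact hmean.trans (le_mul_of_one_le_left (Real.sqrt_nonneg _) hd')
end

section
/- Let T ⊆ ℝ^m and let φⱼ: ℝ → ℝ satisfy |φⱼ(t) − φⱼ(s)| ≤ Lⱼ|t − s| for all t,s and φⱼ(0) = 0, for j = 1,…,m. If ε₁,…,ε_m are independent Rademacher random variables, then E sup_{t∈T} |Σⱼ εⱼ φⱼ(tⱼ)| ≤ 2 E sup_{t∈T} |Σⱼ εⱼ Lⱼ tⱼ|. -/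
/-!
Pair the sign vectors by flipping one coordinate `a`. Within a pair the other coordinates
contribute a common term `c`, and the claim reduces to
`sup (c + g s) + sup (c - g s) ≤ sup (c + K s) + sup (c - K s)` for a `K`-Lipschitz `g`:
any two terms on the left add up to at most `c i + c k + K |s i - s k|`, which is one of the
sums on the right. Linearising the coordinates one at a time gives the comparison without
absolute values. The absolute value costs the factor `2`: after adjoining the point `0`, where
the process vanishes because `φ j 0 = 0`, both `sup X` and `sup (-X)` are nonnegative, so
`sup |X| ≤ sup X + sup (-X)`, and `-φ j` is again Lipschitz.
-/

open Finset Function Bornology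
open scoped NNReal

variable {ι τ α : Type*}

theorem Continuous.bddAbove_image_of_isBounded {E : Type*} [PseudoMetricSpace E] [ProperSpace E]
    {f : E → ℝ} (hf : Continuous f) {S : Set E} (hS : IsBounded S) : BddAbove (f '' S) :=
  (hS.isCompact_closure.bddAbove_image hf.continuousOn).mono (Set.image_mono subset_closure)

theorem biSup_abs_le_iSup_add_iSup_neg {f : α → ℝ} {T : Set α} {o : α} (ho : f o = 0)
    (hf : BddAbove (f '' insert o T)) (hf' : BddAbove ((fun t => -f t) '' insert o T)) :
    ⨆ t ∈ T, |f t| ≤ (⨆ t : ↥(insert o T), f t) + ⨆ t : ↥(insert o T), -f t := by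
  rw [Set.image_eq_range] at hf hf'
  have hp : f o ≤ ⨆ t : ↥(insert o T), f t := le_ciSup hf ⟨o, Set.mem_insert o T⟩
  have hn : -f o ≤ ⨆ t : ↥(insert o T), -f t := le_ciSup hf' ⟨o, Set.mem_insert o T⟩
  rw [ho] at hp hn
  refine Real.iSup_le (fun t => Real.iSup_le (fun ht => ?_) (by linarith)) (by linarith)
  have hpt : f t ≤ ⨆ t : ↥(insert o T), f t := le_ciSup hf ⟨t, Set.mem_insert_of_mem o ht⟩
  have hnt : -f t ≤ ⨆ t : ↥(insert o T), -f t := le_ciSup hf' ⟨t, Set.mem_insert_of_mem o ht⟩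
  exact abs_le'.2 ⟨by linarith, by linarith⟩

theorem iSup_insert_le_biSup_abs {g : α → ℝ} {T : Set α} {o : α} (ho : g o = 0)
    (hg : BddAbove ((fun t => |g t|) '' T)) :
    ⨆ t : ↥(insert o T), g t ≤ ⨆ t ∈ T, |g t| := by
  have hbdd : BddAbove (⋃ t, Set.range fun _ : t ∈ T => |g t|) :=
    hg.mono <| by rintro _ ⟨_, ⟨t, rfl⟩, ⟨ht, rfl⟩⟩; exact Set.mem_image_of_mem _ ht
  refine ciSup_le fun ⟨t, ht⟩ => ?_
  rcases ht with rfl | ht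
  · rw [ho]
    exact Real.iSup_nonneg fun t => Real.iSup_nonneg fun _ => abs_nonneg _
  · exact (le_abs_self _).trans (le_ciSup₂ (f := fun t (_ : t ∈ T) => |g t|) hbdd t ht)

theorem iSup_add_iSup_le_of_lipschitzWith [Nonempty τ] {c s : τ → ℝ} {g : ℝ → ℝ} {K : ℝ≥0}
    (hg : LipschitzWith K g) (hp : BddAbove (Set.range fun i => c i + K * s i))
    (hm : BddAbove (Set.range fun i => c i - K * s i)) :
    (⨆ i, c i + g (s i)) + (⨆ i, c i - g (s i)) ≤
      (⨆ i, c i + K * s i) + ⨆ i, c i - K * s i := by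
  refine ciSup_add_ciSup_le fun i k => ?_
  have hgik : g (s i) - g (s k) ≤ K * |s i - s k| := by
    simpa only [Real.dist_eq] using (le_abs_self _).trans (hg.dist_le_mul (s i) (s k))
  rcases le_total (s k) (s i) with h | h
  · rw [abs_of_nonneg (sub_nonneg.2 h), mul_sub] at hgik
    linarith [le_ciSup hp i, le_ciSup hm k]
  · rw [abs_of_nonpos (sub_nonpos.2 h), neg_sub, mul_sub] at hgik
    linarith [le_ciSup hp k, le_ciSup hm i]

theorem sum_update_true_add_update_false [Fintype ι] [DecidableEq ι] {M : Type*}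
    [AddCommMonoid M] (f : (ι → Bool) → M) (a : ι) :
    ∑ ε, (f (update ε a true) + f (update ε a false)) = 2 • ∑ ε, f ε := by
  have hflip : Involutive fun ε : ι → Bool => update ε a (!ε a) := by
    intro ε
    simp
  have hpair : ∀ ε : ι → Bool,
      f (update ε a true) + f (update ε a false) = f ε + f (update ε a (!ε a)) := by
    intro ε
    cases h : ε a
    · rw [← h, update_eq_self, h, add_comm]; rfl
    · rw [← h, update_eq_self, h]; rfl
  rw [sum_congr rfl fun ε _ => hpair ε, sum_add_distrib, two_nsmul]
  exact congrArg _ (Equiv.sum_comp (hflip.toPerm _) f)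

section RademacherSum

variable [Fintype ι]

noncomputable def rademacherSum (ψ : ι → ℝ → ℝ) (ε : ι → Bool) (t : ι → ℝ) : ℝ :=
  ∑ j, (if ε j then 1 else -1) * ψ j (t j)

theorem rademacherSum_neg (ψ : ι → ℝ → ℝ) (ε : ι → Bool) (t : ι → ℝ) :
    rademacherSum (fun j y => -ψ j y) ε t = -rademacherSum ψ ε t := by
  simp only [rademacherSum, mul_neg, sum_neg_distrib]

theorem rademacherSum_zero {ψ : ι → ℝ → ℝ} (hψ : ∀ j, ψ j 0 = 0) (ε : ι → Bool) :
    rademacherSum ψ ε 0 = 0 := by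
  simp [rademacherSum, hψ]

theorem continuous_rademacherSum {ψ : ι → ℝ → ℝ} (hψ : ∀ j, Continuous (ψ j)) (ε : ι → Bool) :
    Continuous (rademacherSum ψ ε) := by
  unfold rademacherSum
  fun_prop

theorem rademacherSum_update [DecidableEq ι] (ψ : ι → ℝ → ℝ) (ε : ι → Bool) (a : ι)
    (g : ℝ → ℝ) (b : Bool) (t : ι → ℝ) :
    rademacherSum (update ψ a g) (update ε a b) t =
      ∑ j ∈ univ \ {a}, (if ε j then 1 else -1) * ψ j (t j) + (if b then 1 else -1) * g (t a) := by
  have hsummand : (fun j => (if update ε a b j then (1 : ℝ) else -1) * update ψ a g j (t j)) =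
      update (fun j => (if ε j then 1 else -1) * ψ j (t j)) a
        ((if b then 1 else -1) * g (t a)) := by
    ext j
    rcases eq_or_ne j a with rfl | hj <;> simp [update_of_ne, *]
  rw [rademacherSum, hsummand, sum_update_of_mem (mem_univ a), add_comm]

theorem sum_iSup_rademacherSum_update_le [DecidableEq ι] [Nonempty τ] {x : τ → ι → ℝ}
    (hx : IsBounded (Set.range x)) {ψ : ι → ℝ → ℝ} (hψ : ∀ j, Continuous (ψ j)) (a : ι)
    {g : ℝ → ℝ} {K : ℝ≥0} (hg : LipschitzWith K g) :
    ∑ ε, ⨆ i, rademacherSum (update ψ a g) ε (x i) ≤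
      ∑ ε, ⨆ i, rademacherSum (update ψ a (fun y => K * y)) ε (x i) := by
  have hcont : ∀ j, Continuous (update ψ a (fun y => (K : ℝ) * y) j) := by
    intro j
    rcases eq_or_ne j a with rfl | hj
    · simpa using continuous_const_mul (K : ℝ)
    · simpa [update_of_ne hj] using hψ j
  have hbdd : ∀ ε, BddAbove
      (Set.range fun i => rademacherSum (update ψ a (fun y => K * y)) ε (x i)) := fun ε => by
    rw [Set.range_comp']
    exact (continuous_rademacherSum hcont ε).bddAbove_image_of_isBounded hx
  have hpair : ∀ ε : ι → Bool,
      (⨆ i, rademacherSum (update ψ a g) (update ε a true) (x i)) +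
          ⨆ i, rademacherSum (update ψ a g) (update ε a false) (x i) ≤
        (⨆ i, rademacherSum (update ψ a (fun y => K * y)) (update ε a true) (x i)) +
          ⨆ i, rademacherSum (update ψ a (fun y => K * y)) (update ε a false) (x i) := by
    intro ε
    have hp := hbdd (update ε a true)
    have hm := hbdd (update ε a false)
    simp only [rademacherSum_update, if_true, Bool.false_eq_true, if_false, one_mul, neg_one_mul,
      ← sub_eq_add_neg] at hp hm ⊢
    exact iSup_add_iSup_le_of_lipschitzWith hg hp hm
  refine le_of_nsmul_le_nsmul_right two_ne_zero ?_
  rw [← sum_update_true_add_update_false _ a, ← sum_update_true_add_update_false _ a]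
  exact sum_le_sum fun ε _ => hpair ε

theorem sum_iSup_rademacherSum_le_of_lipschitzWith [DecidableEq ι] [Nonempty τ]
    {x : τ → ι → ℝ} (hx : IsBounded (Set.range x)) {φ : ι → ℝ → ℝ} {K : ι → ℝ≥0}
    (hφ : ∀ j, LipschitzWith (K j) (φ j)) :
    ∑ ε, ⨆ i, rademacherSum φ ε (x i) ≤ ∑ ε, ⨆ i, rademacherSum (fun j y => K j * y) ε (x i) := by
  set lin : ι → ℝ → ℝ := fun j y => K j * y
  suffices ∀ S : Finset ι, ∑ ε, ⨆ i, rademacherSum (S.piecewise φ lin) ε (x i) ≤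
      ∑ ε, ⨆ i, rademacherSum lin ε (x i) by
    simpa using this Finset.univ
  intro S
  induction S using Finset.induction_on with
  | empty => simp
  | insert a S ha ih =>
    have hcont : ∀ j, Continuous (S.piecewise φ lin j) := fun j => by
      by_cases hj : j ∈ S
      · simpa [hj] using (hφ j).continuous
      · simpa [hj, lin] using continuous_const_mul (K j : ℝ)
    calc ∑ ε, ⨆ i, rademacherSum ((insert a S).piecewise φ lin) ε (x i)
        = ∑ ε, ⨆ i, rademacherSum (update (S.piecewise φ lin) a (φ a)) ε (x i) := by
          rw [Finset.piecewise_insert]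
      _ ≤ ∑ ε, ⨆ i, rademacherSum (update (S.piecewise φ lin) a (lin a)) ε (x i) :=
          sum_iSup_rademacherSum_update_le hx hcont a (hφ a)
      _ = ∑ ε, ⨆ i, rademacherSum (S.piecewise φ lin) ε (x i) := by
          rw [← Finset.piecewise_eq_of_notMem S φ lin ha, update_eq_self]
      _ ≤ _ := ih

theorem sum_biSup_abs_rademacherSum_le_of_lipschitzWith [DecidableEq ι] {T : Set (ι → ℝ)}
    (hT : IsBounded T) {φ : ι → ℝ → ℝ} {K : ι → ℝ≥0} (hφ : ∀ j, LipschitzWith (K j) (φ j))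
    (h0 : ∀ j, φ j 0 = 0) :
    ∑ ε, ⨆ t ∈ T, |rademacherSum φ ε t| ≤
      2 * ∑ ε, ⨆ t ∈ T, |rademacherSum (fun j y => K j * y) ε t| := by
  set lin : ι → ℝ → ℝ := fun j y => K j * y
  have hS : IsBounded (insert 0 T) := hT.insert 0
  have hS' : IsBounded (Set.range ((↑) : ↥(insert 0 T) → ι → ℝ)) := by rwa [Subtype.range_coe]
  have hcont : ∀ ε, Continuous (rademacherSum φ ε) :=
    continuous_rademacherSum fun j => (hφ j).continuous
  calc ∑ ε, ⨆ t ∈ T, |rademacherSum φ ε t|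
      ≤ ∑ ε, ((⨆ t : ↥(insert 0 T), rademacherSum φ ε t) +
          ⨆ t : ↥(insert 0 T), rademacherSum (fun j y => -φ j y) ε t) := by
        refine sum_le_sum fun ε _ => ?_
        simp only [rademacherSum_neg]
        exact biSup_abs_le_iSup_add_iSup_neg (rademacherSum_zero h0 ε)
          ((hcont ε).bddAbove_image_of_isBounded hS)
          ((hcont ε).neg.bddAbove_image_of_isBounded hS)
    _ ≤ ∑ ε, ((⨆ t : ↥(insert 0 T), rademacherSum lin ε t) +
          ⨆ t : ↥(insert 0 T), rademacherSum lin ε t) := by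
        rw [sum_add_distrib, sum_add_distrib]
        exact add_le_add (sum_iSup_rademacherSum_le_of_lipschitzWith hS' hφ)
          (sum_iSup_rademacherSum_le_of_lipschitzWith hS' fun j => (hφ j).neg)
    _ ≤ 2 * ∑ ε, ⨆ t ∈ T, |rademacherSum lin ε t| := by
        rw [mul_sum]
        refine sum_le_sum fun ε _ => ?_
        have hlin : ∀ j, Continuous (lin j) := fun j => continuous_const_mul _
        have := iSup_insert_le_biSup_abs (rademacherSum_zero (fun j => mul_zero _) ε)
          ((continuous_rademacherSum hlin ε).abs.bddAbove_image_of_isBounded hT)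
        linarith

end RademacherSum

theorem stmt4_general (m : ℕ) (T : Set (Fin m → ℝ)) (hT : Bornology.IsBounded T)
    (φ : Fin m → ℝ → ℝ) (L : Fin m → ℝ)
    (hLip : ∀ j, ∀ s t : ℝ, |φ j t - φ j s| ≤ L j * |t - s|)
    (h0 : ∀ j, φ j 0 = 0) :
    (∑ ε : Fin m → Bool,
        ⨆ t ∈ T, |∑ j, (if ε j then (1 : ℝ) else -1) * φ j (t j)|) / 2 ^ m
      ≤ 2 * ((∑ ε : Fin m → Bool,
          ⨆ t ∈ T, |∑ j, (if ε j then (1 : ℝ) else -1) * (L j * t j)|) / 2 ^ m) := by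
  obtain ⟨K, hK⟩ : ∃ K : Fin m → ℝ≥0, ∀ j, (K j : ℝ) = L j :=
    ⟨fun j => ⟨L j, (abs_nonneg _).trans (by simpa using hLip j 0 1)⟩, fun j => rfl⟩
  have hφ : ∀ j, LipschitzWith (K j) (φ j) := fun j =>
    LipschitzWith.of_dist_le_mul fun s t => by
      rw [Real.dist_eq, Real.dist_eq, hK]
      exact hLip j t s
  have key := sum_biSup_abs_rademacherSum_le_of_lipschitzWith hT hφ h0
  simp only [rademacherSum, hK] at key
  rw [mul_div_assoc']
  exact div_le_div_of_nonneg_right key (by positivity)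

/-- **Comparison principle (contraction principle) for Rademacher averages.**
If `T ⊆ ℝ^m` is bounded and each `φ j : ℝ → ℝ` is `L j`-Lipschitz with `φ j 0 = 0`, then
`𝔼_ε sup_{t ∈ T} |∑ j ε j φ j (t j)| ≤ 2 𝔼_ε sup_{t ∈ T} |∑ j ε j (L j) (t j)|`. -/
theorem stmt4 (m : ℕ) (T : Set (Fin m → ℝ)) (hT : Bornology.IsBounded T)
    (φ : Fin m → ℝ → ℝ) (L : Fin m → ℝ) (hL : ∀ j, 0 < L j)
    (hLip : ∀ j, ∀ s t : ℝ, |φ j t - φ j s| ≤ L j * |t - s|)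
    (h0 : ∀ j, φ j 0 = 0) :
    (∑ ε : Fin m → Bool,
        ⨆ t ∈ T, |∑ j, (if ε j then (1 : ℝ) else -1) * φ j (t j)|) / 2 ^ m
      ≤ 2 * ((∑ ε : Fin m → Bool,
          ⨆ t ∈ T, |∑ j, (if ε j then (1 : ℝ) else -1) * (L j * t j)|) / 2 ^ m) :=
  stmt4_general m T hT φ L hLip h0
end

section
/- Let δ_k ≥ 0 be a sequence satisfying δ_{k+1} ≤ (1 − γ_k)δ_k + 2γ_k² with γ_k = 2/(k+1) for all k ≥ 0. Then δ_{k+1} ≤ 8/(k+1) for all k ≥ 0. -/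
/-!
With `γ_k = 2/(k+1)` the bound `4c/(k+1)` is self-propagating: substituting it into
`(1 - γ) δ + c γ²` at index `x = k+1` gives `4c (x² + x - 1) / (x (x+1)²) ≤ 4c/(x+1)`.
At `k = 0` the step size is `γ_0 = 2`, so the recursion alone forces `δ_1 ≤ 4c - δ_0 ≤ 4c`.
-/

lemma frankWolfe_bound_step {c x : ℝ} (hc : 0 ≤ c) (hx : 1 ≤ x) :
    (1 - 2 / (x + 1)) * (4 * c / x) + c * (2 / (x + 1)) ^ 2 ≤ 4 * c / (x + 1) := by
  have hx0 : x ≠ 0 := by positivity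
  have hx1 : x + 1 ≠ 0 := by positivity
  field_simp
  nlinarith

theorem frankWolfe_rate {c : ℝ} (hc : 0 ≤ c) (δ : ℕ → ℝ) (hδ₀ : 0 ≤ δ 0)
    (hrec : ∀ k : ℕ, δ (k + 1) ≤ (1 - 2 / ((k : ℝ) + 1)) * δ k + c * (2 / ((k : ℝ) + 1)) ^ 2) :
    ∀ k : ℕ, δ (k + 1) ≤ 4 * c / ((k : ℝ) + 1) := by
  intro k
  induction k with
  | zero =>
    have h := hrec 0
    norm_num at h ⊢
    linarith
  | succ n ih =>
    have h := hrec (n + 1)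
    push_cast at h ⊢
    have hγ : 0 ≤ 1 - 2 / ((n : ℝ) + 1 + 1) := by
      rw [sub_nonneg, div_le_one (by positivity)]
      linarith [(n.cast_nonneg : (0 : ℝ) ≤ n)]
    calc δ (n + 1 + 1)
        ≤ (1 - 2 / ((n : ℝ) + 1 + 1)) * δ (n + 1) + c * (2 / ((n : ℝ) + 1 + 1)) ^ 2 := h
      _ ≤ (1 - 2 / ((n : ℝ) + 1 + 1)) * (4 * c / ((n : ℝ) + 1))
            + c * (2 / ((n : ℝ) + 1 + 1)) ^ 2 := by gcongr
      _ ≤ 4 * c / ((n : ℝ) + 1 + 1) :=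
        frankWolfe_bound_step hc (by linarith [(n.cast_nonneg : (0 : ℝ) ≤ n)])

/-- **Frank–Wolfe recursion.** If `δ k ≥ 0` satisfies
`δ (k+1) ≤ (1 - γ k) δ k + 2 γ k²` with `γ k = 2/(k+1)` for all `k ≥ 0`,
then `δ (k+1) ≤ 8/(k+1)` for all `k ≥ 0`. -/
theorem stmt15 (δ : ℕ → ℝ) (hδ : ∀ k, 0 ≤ δ k)
    (hrec : ∀ k : ℕ,
      δ (k + 1) ≤ (1 - 2 / ((k : ℝ) + 1)) * δ k + 2 * (2 / ((k : ℝ) + 1)) ^ 2) :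
    ∀ k : ℕ, δ (k + 1) ≤ 8 / ((k : ℝ) + 1) := by
  intro k
  have h := frankWolfe_rate zero_le_two δ (hδ 0) hrec k
  norm_num at h
  exact h
end

section
/- Let f be an n-variate symmetric d-tensor (homogeneous degree-d polynomial), let 2 ≤ r ≤ ∞, and ε > 0. Then there exists a symmetric d-tensor h with ‖f − h‖_r ≤ ε and symmetric tensor rank srank(h) ≤ ‖f‖²_{HS}/ε², where srank(h) is the minimal m such that h = Σ_{i=1}^m cᵢ vᵢ^{⊗d} with cᵢ ∈ ℝ, vᵢ ∈ Sⁿ⁻¹, ‖·‖_r is the L^r norm on the sphere, and ‖·‖_{HS} is the Hilbert–Schmidt (Bombieri–Weyl) norm. -/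
open MeasureTheory MvPolynomial

/-- The uniform (rotation-invariant) probability measure on the unit sphere `Sⁿ⁻¹ ⊆ ℝⁿ`. -/
noncomputable def sphereUniform (n : ℕ) :
    Measure (Metric.sphere (0 : EuclideanSpace ℝ (Fin n)) 1) :=
  ((volume : Measure (EuclideanSpace ℝ (Fin n))).toSphere Set.univ)⁻¹ •
    (volume : Measure (EuclideanSpace ℝ (Fin n))).toSphere

/-- Evaluation of an `n`-variate polynomial at a point of the unit sphere. -/
noncomputable def sphereEval {n : ℕ} (g : MvPolynomial (Fin n) ℝ)
    (x : Metric.sphere (0 : EuclideanSpace ℝ (Fin n)) 1) : ℝ :=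
  MvPolynomial.eval (fun i => (x : EuclideanSpace ℝ (Fin n)) i) g

/-- The `L^r` norm of a polynomial with respect to the uniform probability measure on the
unit sphere: `‖g‖_r = (∫_{Sⁿ⁻¹} |g(x)|^r dσ(x))^{1/r}`. -/
noncomputable def sphereLrNorm (n : ℕ) (g : MvPolynomial (Fin n) ℝ) (r : ℝ) : ℝ :=
  (∫ x, |sphereEval g x| ^ r ∂(sphereUniform n)) ^ (1 / r)

/-- The sup norm of a polynomial on the unit sphere: `‖g‖_∞ = max_{x ∈ Sⁿ⁻¹} |g(x)|`. -/
noncomputable def sphereSupNorm (n : ℕ) (g : MvPolynomial (Fin n) ℝ) : ℝ :=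
  ⨆ x : Metric.sphere (0 : EuclideanSpace ℝ (Fin n)) 1, |sphereEval g x|

/-- The linear form `x ↦ ⟨v, x⟩` as a polynomial; its `d`-th power is the polynomial of the
rank-one symmetric tensor `v^{⊗d}`. -/
noncomputable def linForm {n : ℕ} (v : EuclideanSpace ℝ (Fin n)) : MvPolynomial (Fin n) ℝ :=
  ∑ i, MvPolynomial.C (v i) * MvPolynomial.X i

/-- `h` has symmetric tensor rank at most `m`: `h = ∑_{i=1}^m c i ⋅ (v i)^{⊗d}` with
`v i` unit vectors. -/
def SrankLE {n : ℕ} (d : ℕ) (h : MvPolynomial (Fin n) ℝ) (m : ℕ) : Prop :=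
  ∃ (c : Fin m → ℝ) (v : Fin m → EuclideanSpace ℝ (Fin n)),
    (∀ i, ‖v i‖ = 1) ∧ h = ∑ i, c i • (linForm (v i)) ^ d

/-- The Hilbert–Schmidt (Bombieri–Weyl) norm of a symmetric tensor in the monomial index:
`‖f‖²_HS = ∑_α f_α² / (d choose α)`. -/
noncomputable def hsNorm {n : ℕ} (f : MvPolynomial (Fin n) ℝ) : ℝ :=
  Real.sqrt (∑ α ∈ f.support,
    (MvPolynomial.coeff α f) ^ 2 / (Nat.multinomial α.support α : ℝ))

/- A symmetric `d`-tensor `g` is paired with `v^{⊗d}` by the Hilbert–Schmidt inner product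
`⟨g, v^{⊗d}⟩ = ∑_α g_α (v^{⊗d})_α / (d choose α) = g(v)`, and `‖v^{⊗d}‖²_HS = ‖v‖^{2d}`.
Hence, while some unit `v` has `|g(v)| > ε`, replacing `g` by `g - g(v) • v^{⊗d}` lowers
`‖g‖²_HS` by `g(v)² > ε²`; this can happen at most `‖f‖²_HS / ε²` times, and the rank-one
terms removed along the way form `h`. A sup-norm bound on the sphere bounds every `L^r` norm,
since the normalized surface measure has mass at most one. -/

lemma rpow_integral_abs_rpow_le {α : Type*} [MeasurableSpace α] {μ : Measure α}
    (hμ : μ Set.univ ≤ 1) {F : α → ℝ} {ε r : ℝ} (hε : 0 ≤ ε) (hr : 0 < r)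
    (hF : ∀ x, |F x| ≤ ε) :
    (∫ x, |F x| ^ r ∂μ) ^ (1 / r) ≤ ε := by
  have : IsFiniteMeasure μ := ⟨hμ.trans_lt ENNReal.one_lt_top⟩
  have hint : ∫ x, |F x| ^ r ∂μ ≤ ε ^ r :=
    calc ∫ x, |F x| ^ r ∂μ
        ≤ ∫ _, ε ^ r ∂μ :=
          integral_mono_of_nonneg (ae_of_all _ fun x => by positivity) (integrable_const _)
            (ae_of_all _ fun x => Real.rpow_le_rpow (abs_nonneg _) (hF x) hr.le)
      _ = μ.real Set.univ * ε ^ r := by rw [integral_const, smul_eq_mul]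
      _ ≤ ε ^ r := mul_le_of_le_one_left (by positivity)
          (ENNReal.toReal_le_of_le_ofReal zero_le_one (by simpa using hμ))
  calc (∫ x, |F x| ^ r ∂μ) ^ (1 / r)
      ≤ (ε ^ r) ^ (1 / r) :=
        Real.rpow_le_rpow (integral_nonneg fun x => by positivity) hint (by positivity)
    _ = ε := by rw [one_div, Real.rpow_rpow_inv hε hr.ne']

section

variable {n d : ℕ}

lemma linForm_eq_sum_smul_X (v : EuclideanSpace ℝ (Fin n)) :
    linForm v = ∑ i, v i • X i := by
  simp only [linForm, smul_eq_C_mul]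

lemma isHomogeneous_smul_linForm_pow (c : ℝ) (v : EuclideanSpace ℝ (Fin n)) :
    (c • (linForm v) ^ d).IsHomogeneous d := by
  have hlin : (linForm v).IsHomogeneous 1 :=
    IsHomogeneous.sum _ _ _ fun i _ => (isHomogeneous_X ℝ i).C_mul (v i)
  rw [smul_eq_C_mul]
  simpa using (hlin.pow d).C_mul c

lemma eval_linForm (v x : EuclideanSpace ℝ (Fin n)) :
    eval (fun i => x i) (linForm v) = inner ℝ x v := by
  simp [linForm, PiLp.inner_apply, mul_comm]

lemma coeff_linForm_pow {α : Fin n →₀ ℕ} (hα : α.degree = d) (v : EuclideanSpace ℝ (Fin n)) :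
    coeff α ((linForm v) ^ d) = α.multinomial * ∏ i ∈ α.support, v i ^ α i := by
  rw [linForm_eq_sum_smul_X, coeff_linearCombination_X_pow_of_fintype, if_pos]
  · rfl
  · exact hα

lemma hsNorm_sq_eq_sum {g : MvPolynomial (Fin n) ℝ} {s : Finset (Fin n →₀ ℕ)}
    (hs : g.support ⊆ s) :
    hsNorm g ^ 2 = ∑ α ∈ s, coeff α g ^ 2 / α.multinomial := by
  rw [hsNorm, Real.sq_sqrt (Finset.sum_nonneg fun α _ => by positivity)]
  exact Finset.sum_subset hs fun α _ hα => by simp [notMem_support_iff.mp hα]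

lemma eval_linForm_pow_self (v : EuclideanSpace ℝ (Fin n)) :
    eval (fun i => v i) ((linForm v) ^ d) = ‖v‖ ^ (2 * d) := by
  rw [map_pow, eval_linForm, real_inner_self_eq_norm_sq, pow_mul]

lemma MvPolynomial.IsHomogeneous.degree_of_mem_support {g : MvPolynomial (Fin n) ℝ}
    (hg : g.IsHomogeneous d) {α : Fin n →₀ ℕ} (hα : α ∈ g.support) : α.degree = d := by
  rw [Finsupp.degree_eq_weight_one]
  exact hg (mem_support_iff.mp hα)

lemma sum_coeff_mul_coeff_linForm_pow {g : MvPolynomial (Fin n) ℝ} (hg : g.IsHomogeneous d)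
    {s : Finset (Fin n →₀ ℕ)} (hs : g.support ⊆ s) (v : EuclideanSpace ℝ (Fin n)) :
    ∑ α ∈ s, coeff α g * coeff α ((linForm v) ^ d) / α.multinomial =
      eval (fun i => v i) g := by
  rw [← Finset.sum_subset hs fun α _ hα => by simp [notMem_support_iff.mp hα], eval_eq]
  refine Finset.sum_congr rfl fun α hα => ?_
  have hpos : (α.multinomial : ℝ) ≠ 0 := by exact_mod_cast (Nat.multinomial_pos _ _).ne'
  rw [coeff_linForm_pow (hg.degree_of_mem_support hα)]
  field_simp

lemma hsNorm_sub_smul_linForm_pow_sq {g : MvPolynomial (Fin n) ℝ} (hg : g.IsHomogeneous d)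
    (v : EuclideanSpace ℝ (Fin n)) (c : ℝ) :
    hsNorm (g - c • (linForm v) ^ d) ^ 2 =
      hsNorm g ^ 2 - 2 * c * eval (fun i => v i) g + c ^ 2 * ‖v‖ ^ (2 * d) := by
  classical
  set p := (linForm v) ^ d
  set s := g.support ∪ p.support
  have hsub : (g - c • p).support ⊆ s :=
    (support_sub _ _ _).trans (Finset.union_subset_union le_rfl support_smul)
  rw [hsNorm_sq_eq_sum hsub, hsNorm_sq_eq_sum Finset.subset_union_left,
    ← sum_coeff_mul_coeff_linForm_pow hg Finset.subset_union_left,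
    ← eval_linForm_pow_self,
    ← sum_coeff_mul_coeff_linForm_pow (by simpa using isHomogeneous_smul_linForm_pow 1 v)
      Finset.subset_union_right,
    Finset.mul_sum, Finset.mul_sum, ← Finset.sum_sub_distrib, ← Finset.sum_add_distrib]
  refine Finset.sum_congr rfl fun α _ => ?_
  rw [coeff_sub, coeff_smul, smul_eq_mul]
  ring

lemma srankLE_zero : SrankLE (n := n) d 0 0 :=
  ⟨Fin.elim0, Fin.elim0, fun i => i.elim0, by simp⟩

lemma SrankLE.add_smul_linForm_pow {h : MvPolynomial (Fin n) ℝ} {m : ℕ} (hh : SrankLE d h m)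
    {v : EuclideanSpace ℝ (Fin n)} (hv : ‖v‖ = 1) (c : ℝ) :
    SrankLE d (h + c • (linForm v) ^ d) (m + 1) := by
  obtain ⟨cs, vs, hvs, rfl⟩ := hh
  refine ⟨Fin.snoc cs c, Fin.snoc vs v, fun i => ?_, by simp [Fin.sum_univ_castSucc]⟩
  induction i using Fin.lastCases <;> simp [hv, hvs]

theorem exists_srankLE_abs_sphereEval_sub_le {g : MvPolynomial (Fin n) ℝ}
    (hg : g.IsHomogeneous d) {ε : ℝ} (hε : 0 < ε) :
    ∃ (h : MvPolynomial (Fin n) ℝ) (m : ℕ), h.IsHomogeneous d ∧ SrankLE d h m ∧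
      m * ε ^ 2 ≤ hsNorm g ^ 2 ∧ ∀ x, |sphereEval (g - h) x| ≤ ε := by
  obtain ⟨k, hk⟩ : ∃ k : ℕ, hsNorm g ^ 2 < k * ε ^ 2 := by
    obtain ⟨k, hk⟩ := exists_nat_gt (hsNorm g ^ 2 / ε ^ 2)
    exact ⟨k, (div_lt_iff₀ (by positivity)).1 hk⟩
  induction k generalizing g with
  | zero => exact absurd hk (by simpa using sq_nonneg (hsNorm g))
  | succ k ih =>
    by_cases hsmall : ∀ x, |sphereEval g x| ≤ ε
    · exact ⟨0, 0, isHomogeneous_zero _ _ _, srankLE_zero, by simpa using sq_nonneg _,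
        by simpa using hsmall⟩
    push Not at hsmall
    obtain ⟨x, hx⟩ := hsmall
    set v : EuclideanSpace ℝ (Fin n) := ↑x
    set c := sphereEval g x
    have hv : ‖v‖ = 1 := norm_eq_of_mem_sphere x
    have hdrop : hsNorm (g - c • (linForm v) ^ d) ^ 2 = hsNorm g ^ 2 - c ^ 2 := by
      rw [hsNorm_sub_smul_linForm_pow_sq hg, hv, one_pow]
      change _ - 2 * c * c + _ = _
      ring
    have hc : ε ^ 2 < c ^ 2 := by
      simpa using pow_lt_pow_left₀ hx hε.le two_ne_zero
    obtain ⟨h, m, hh, hsr, hm, hgh⟩ :=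
      ih (hg.sub (isHomogeneous_smul_linForm_pow c v)) (by push_cast at hk; linarith)
    refine ⟨h + c • (linForm v) ^ d, m + 1, hh.add (isHomogeneous_smul_linForm_pow c v),
      SrankLE.add_smul_linForm_pow hsr hv c, by push_cast; linarith, fun y => ?_⟩
    rw [show g - (h + c • (linForm v) ^ d) = g - c • (linForm v) ^ d - h by abel]
    exact hgh y

lemma sphereUniform_univ_le_one : sphereUniform n Set.univ ≤ 1 := by
  rw [sphereUniform, Measure.smul_apply, smul_eq_mul]
  exact ENNReal.inv_mul_le_one _

end

theorem stmt17_general (n d : ℕ)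
    (f : MvPolynomial (Fin n) ℝ) (hf : f.IsHomogeneous d) (ε : ℝ) (hε : 0 < ε) :
    (∀ r : ℝ, 2 ≤ r →
      ∃ (h : MvPolynomial (Fin n) ℝ) (m : ℕ), h.IsHomogeneous d ∧ SrankLE d h m ∧
        (m : ℝ) ≤ hsNorm f ^ 2 / ε ^ 2 ∧ sphereLrNorm n (f - h) r ≤ ε) ∧
    (∃ (h : MvPolynomial (Fin n) ℝ) (m : ℕ), h.IsHomogeneous d ∧ SrankLE d h m ∧
      (m : ℝ) ≤ hsNorm f ^ 2 / ε ^ 2 ∧ sphereSupNorm n (f - h) ≤ ε) := by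
  obtain ⟨h, m, hh, hsr, hm, hfh⟩ := exists_srankLE_abs_sphereEval_sub_le hf hε
  have hm' : (m : ℝ) ≤ hsNorm f ^ 2 / ε ^ 2 := (le_div_iff₀ (by positivity)).2 hm
  exact ⟨fun r hr => ⟨h, m, hh, hsr, hm',
      rpow_integral_abs_rpow_le sphereUniform_univ_le_one hε.le (by linarith) hfh⟩,
    ⟨h, m, hh, hsr, hm', Real.iSup_le hfh hε.le⟩⟩

/-- **Approximate rank via energy increment (Theorem 3.1).** For every symmetric `d`-tensor
`f`, every `2 ≤ r ≤ ∞`, and every `ε > 0`, there is a symmetric `d`-tensor `h` with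
`‖f - h‖_r ≤ ε` and `srank(h) ≤ ‖f‖²_HS/ε²`. -/
theorem stmt17 (n d : ℕ) (hn : 1 ≤ n)
    (f : MvPolynomial (Fin n) ℝ) (hf : f.IsHomogeneous d) (ε : ℝ) (hε : 0 < ε) :
    (∀ r : ℝ, 2 ≤ r →
      ∃ (h : MvPolynomial (Fin n) ℝ) (m : ℕ), h.IsHomogeneous d ∧ SrankLE d h m ∧
        (m : ℝ) ≤ hsNorm f ^ 2 / ε ^ 2 ∧ sphereLrNorm n (f - h) r ≤ ε) ∧
    (∃ (h : MvPolynomial (Fin n) ℝ) (m : ℕ), h.IsHomogeneous d ∧ SrankLE d h m ∧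
      (m : ℝ) ≤ hsNorm f ^ 2 / ε ^ 2 ∧ sphereSupNorm n (f - h) ≤ ε) :=
  stmt17_general n d f hf ε hε
end
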